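/- Variance of the kernel density estimator: under the same regularity conditions (f twice differentiable with bounded second derivative, K bounded with compact support, nh_n → ∞, h_n → 0), Var[ĝ_n(x)] = f(x)‖K‖_2² / (n h_n) + o(1/(n h_n)) at interior points x of supp(f), where ‖K‖_2² = ∫K². -/

import Mathlib

/-!
The summands `K ((x - Xᵢ) / h)` of the estimator are i.i.d. and bounded, so
`n h · Var ĝₙ(x) = Var K ((x - X₀) / h) / h`. Substituting `t = x - h u` in the two moments
turns this into `∫ f (x - h u) K(u)² du - h (∫ f (x - h u) K(u) du)²`. Since `f` is continuous
and `K` is bounded with compact support, dominated convergence sends the first integral to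
`f x ∫ K²` and keeps the second one bounded, so the second term vanishes as `h → 0`.
-/

open MeasureTheory ProbabilityTheory Filter Topology

theorem HasCompactSupport.integrable_of_bound {α E : Type*} [TopologicalSpace α]
    [MeasurableSpace α] {μ : Measure α} [IsFiniteMeasureOnCompacts μ] [NormedAddCommGroup E]
    {q : α → E} (hq : HasCompactSupport q) (hm : AEStronglyMeasurable q μ) {C : ℝ}
    (hC : ∀ a, ‖q a‖ ≤ C) : Integrable q μ :=
  (integrableOn_iff_integrable_of_support_subset (subset_tsupport q)).1
    (Measure.integrableOn_of_bounded hq.measure_lt_top.ne hm (ae_of_all _ hC))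

theorem integral_mul_comp_sub_div (f q : ℝ → ℝ) {c : ℝ} (hc : 0 < c) (x : ℝ) :
    ∫ t, f t * q ((x - t) / c) = c * ∫ u, f (x - c * u) * q u := by
  set G : ℝ → ℝ := fun t => f t * q ((x - t) / c)
  have hG : ∀ u, G (x - c * u) = f (x - c * u) * q u := fun u => by
    simp only [G, sub_sub_cancel, mul_div_cancel_left₀ _ hc.ne']
  calc ∫ t, G t = ∫ t, G (x - t) := (integral_sub_left_eq_self G volume x).symm
    _ = c * ∫ u, G (x - c * u) := by
      rw [Measure.integral_comp_mul_left (fun t => G (x - t)) c, abs_of_pos (inv_pos.2 hc),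
        smul_eq_mul, mul_inv_cancel_left₀ hc.ne']
    _ = c * ∫ u, f (x - c * u) * q u := by simp only [hG]

theorem tendsto_integral_comp_sub_mul_mul {ι : Type*} {l : Filter ι} [l.IsCountablyGenerated]
    {f q : ℝ → ℝ} (hf : Continuous f) (hq : Integrable q) (hqs : HasCompactSupport q)
    {h : ι → ℝ} (hh : Tendsto h l (𝓝 0)) (x : ℝ) :
    Tendsto (fun i => ∫ u, f (x - h i * u) * q u) l (𝓝 (f x * ∫ u, q u)) := by
  obtain ⟨R, hR⟩ := hqs.isCompact.isBounded.subset_closedBall 0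
  obtain ⟨M, hM⟩ := (isCompact_closedBall x R).exists_bound_of_continuousOn hf.continuousOn
  have hbound : ∀ᶠ i in l, ∀ u, ‖f (x - h i * u) * q u‖ ≤ M * ‖q u‖ := by
    filter_upwards [(tendsto_zero_iff_norm_tendsto_zero.1 hh).eventually_le_const one_pos]
      with i hi u
    by_cases hu : u ∈ tsupport q
    · have hu' : ‖u‖ ≤ R := by simpa using hR hu
      have hux : x - h i * u ∈ Metric.closedBall x R := by
        rw [Metric.mem_closedBall, dist_eq_norm, sub_sub_cancel_left, norm_neg, norm_mul]
        nlinarith [norm_nonneg (h i), norm_nonneg u]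
      rw [norm_mul]
      exact mul_le_mul_of_nonneg_right (hM _ hux) (norm_nonneg _)
    · simp [image_eq_zero_of_notMem_tsupport hu]
  have hlim : ∀ u, Tendsto (fun i => f (x - h i * u) * q u) l (𝓝 (f x * q u)) := fun u =>
    ((hf.tendsto x).comp (by simpa using tendsto_const_nhds.sub (hh.mul_const u))).mul_const _
  rw [← integral_const_mul]
  exact tendsto_integral_filter_of_dominated_convergence _
    (.of_forall fun i => (hf.comp (by fun_prop)).aestronglyMeasurable.mul hq.aestronglyMeasurable)
    (hbound.mono fun i hi => .of_forall hi) (hq.norm.const_mul M) (.of_forall hlim)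

section Sample

variable {Ω : Type*} [MeasurableSpace Ω] {μ : Measure Ω} {f : ℝ → ℝ}

theorem integral_comp_eq_integral_mul_of_map_eq_withDensity {X : Ω → ℝ} (hX : Measurable X)
    (hf : Measurable f) (hf0 : ∀ t, 0 ≤ f t)
    (hdist : μ.map X = volume.withDensity (fun t => ENNReal.ofReal (f t)))
    {G : ℝ → ℝ} (hG : Measurable G) :
    ∫ ω, G (X ω) ∂μ = ∫ t, f t * G t := by
  rw [← integral_map hX.aemeasurable hG.aestronglyMeasurable, hdist,
    integral_withDensity_eq_integral_toReal_smul hf.ennreal_ofReal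
      (.of_forall fun _ => ENNReal.ofReal_lt_top)]
  simp only [ENNReal.toReal_ofReal (hf0 _), smul_eq_mul]

theorem variance_comp_eq_of_map_eq_withDensity [IsProbabilityMeasure μ] {X : Ω → ℝ}
    (hX : Measurable X) (hf : Measurable f) (hf0 : ∀ t, 0 ≤ f t)
    (hdist : μ.map X = volume.withDensity (fun t => ENNReal.ofReal (f t)))
    {q : ℝ → ℝ} (hq : Measurable q) {C : ℝ} (hC : ∀ t, |q t| ≤ C) :
    variance (fun ω => q (X ω)) μ = (∫ t, f t * q t ^ 2) - (∫ t, f t * q t) ^ 2 := by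
  have hqX : Measurable fun ω => q (X ω) := hq.comp hX
  rw [variance_eq_sub (.of_bound hqX.aestronglyMeasurable C (.of_forall fun _ => hC _))]
  simp only [Pi.pow_apply]
  rw [integral_comp_eq_integral_mul_of_map_eq_withDensity hX hf hf0 hdist (hq.pow_const 2),
    integral_comp_eq_integral_mul_of_map_eq_withDensity hX hf hf0 hdist hq]

noncomputable def kernelDensityEstimate (K : ℝ → ℝ) (h : ℝ) (X : ℕ → Ω → ℝ) (n : ℕ) (x : ℝ)
    (ω : Ω) : ℝ :=
  (∑ i ∈ Finset.range n, K ((x - X i ω) / h)) / (n * h)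

theorem mul_variance_kernelDensityEstimate [IsProbabilityMeasure μ] {X : ℕ → Ω → ℝ}
    (hX : ∀ i, Measurable (X i)) (hindep : iIndepFun X μ) (hf : Measurable f)
    (hf0 : ∀ t, 0 ≤ f t)
    (hdist : ∀ i, μ.map (X i) = volume.withDensity (fun t => ENNReal.ofReal (f t)))
    {K : ℝ → ℝ} (hK : Measurable K) {C : ℝ} (hC : ∀ u, |K u| ≤ C)
    {h : ℝ} (hh : 0 < h) {n : ℕ} (hn : n ≠ 0) (x : ℝ) :
    (n * h) * variance (kernelDensityEstimate K h X n x) μ =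
      (∫ u, f (x - h * u) * K u ^ 2) - h * (∫ u, f (x - h * u) * K u) ^ 2 := by
  set Y : ℕ → Ω → ℝ := fun i ω => K ((x - X i ω) / h)
  have hKx : Measurable fun t => K ((x - t) / h) := hK.comp (by fun_prop)
  have hY : ∀ i, MemLp (Y i) 2 μ := fun i =>
    .of_bound (hKx.comp (hX i)).aestronglyMeasurable C (.of_forall fun _ => hC _)
  have hvarY : ∀ i, variance (Y i) μ =
      h * (∫ u, f (x - h * u) * K u ^ 2) - (h * ∫ u, f (x - h * u) * K u) ^ 2 := fun i => by
    rw [variance_comp_eq_of_map_eq_withDensity (hX i) hf hf0 (hdist i) hKx (fun _ => hC _),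
      integral_mul_comp_sub_div f K hh x, integral_mul_comp_sub_div f (fun s => K s ^ 2) hh x]
  have hvarS : variance (∑ i ∈ Finset.range n, Y i) μ =
      n * (h * (∫ u, f (x - h * u) * K u ^ 2) - (h * ∫ u, f (x - h * u) * K u) ^ 2) := by
    rw [IndepFun.variance_sum (fun i _ => hY i)
        (fun i _ j _ hij => (hindep.comp _ fun _ => hKx).indepFun hij),
      Finset.sum_congr rfl fun i _ => hvarY i, Finset.sum_const, Finset.card_range, nsmul_eq_mul]
  have hkde : kernelDensityEstimate K h X n x =
      fun ω => (n * h)⁻¹ * (∑ i ∈ Finset.range n, Y i) ω := by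
    funext ω
    rw [kernelDensityEstimate, div_eq_inv_mul, Finset.sum_apply]
  rw [hkde, variance_const_mul, hvarS]
  field_simp

end Sample

theorem kde_variance_general
    {Ω : Type*} [MeasurableSpace Ω] (μ : Measure Ω) [IsProbabilityMeasure μ]
    (X : ℕ → Ω → ℝ) (hX : ∀ i, Measurable (X i))
    (hindep : iIndepFun X μ)
    (f f' : ℝ → ℝ) (hfnonneg : ∀ t, 0 ≤ f t)
    (hdist : ∀ i, Measure.map (X i) μ = volume.withDensity (fun t => ENNReal.ofReal (f t)))
    (hf' : ∀ t, HasDerivAt f (f' t) t)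
    (K : ℝ → ℝ) (hKmeas : Measurable K) (hKbdd : ∃ C, ∀ u, |K u| ≤ C)
    (hKsupp : HasCompactSupport K)
    (h : ℕ → ℝ) (hpos : ∀ n, 0 < h n) (hto0 : Tendsto h atTop (nhds 0))
    (x : ℝ)
    (ghat : ℕ → Ω → ℝ)
    (hghat : ∀ n ω, ghat n ω =
      (∑ i ∈ Finset.range n, K ((x - X i ω) / h n)) / (n * h n)) :
    Tendsto (fun n : ℕ =>
        (n * h n) * ∫ ω, (ghat n ω - ∫ ω', ghat n ω' ∂μ) ^ 2 ∂μ)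
      atTop (nhds (f x * ∫ u, (K u) ^ 2)) := by
  have hf : Continuous f := continuous_iff_continuousAt.2 fun t => (hf' t).continuousAt
  obtain ⟨C, hC⟩ := hKbdd
  have hvar : ∀ᶠ n : ℕ in atTop,
      (∫ u, f (x - h n * u) * K u ^ 2) - h n * (∫ u, f (x - h n * u) * K u) ^ 2 =
        (n * h n) * ∫ ω, (ghat n ω - ∫ ω', ghat n ω' ∂μ) ^ 2 ∂μ := by
    filter_upwards [eventually_ne_atTop 0] with n hn
    rw [funext (hghat n), ← variance_eq_integral (by fun_prop),
      ← mul_variance_kernelDensityEstimate hX hindep hf.measurable hfnonneg hdist hKmeas hC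
        (hpos n) hn]
    rfl
  have hK2supp : HasCompactSupport fun u => K u ^ 2 := hKsupp.comp_left (g := (· ^ 2)) (by simp)
  have hKint : Integrable K := hKsupp.integrable_of_bound hKmeas.aestronglyMeasurable hC
  have hK2int : Integrable fun u => K u ^ 2 :=
    hK2supp.integrable_of_bound (hKmeas.pow_const 2).aestronglyMeasurable fun u => by
      simpa [abs_pow, sq_abs] using pow_le_pow_left₀ (abs_nonneg _) (hC u) 2
  have hK2 := tendsto_integral_comp_sub_mul_mul hf hK2int hK2supp hto0 x
  have hK1 := tendsto_integral_comp_sub_mul_mul hf hKint hKsupp hto0 x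
  refine Tendsto.congr' hvar ?_
  simpa using hK2.sub (hto0.mul (hK1.pow 2))

/-- Variance of the univariate kernel density estimator: under the standing regularity
conditions, with `h n → 0` and `n · h n → ∞`, at an interior point `x` of the support,
`Var[ĝ_n(x)] = f x · ‖K‖₂² / (n h n) + o(1/(n h n))`, i.e.
`(n h n) · Var[ĝ_n(x)] → f x · ∫ K²`. -/
theorem kde_variance
    {Ω : Type*} [MeasurableSpace Ω] (μ : Measure Ω) [IsProbabilityMeasure μ]
    (X : ℕ → Ω → ℝ) (hX : ∀ i, Measurable (X i))
    (hindep : iIndepFun X μ)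
    (f f' f'' : ℝ → ℝ) (hfnonneg : ∀ t, 0 ≤ f t)
    (hdist : ∀ i, Measure.map (X i) μ = volume.withDensity (fun t => ENNReal.ofReal (f t)))
    (hf' : ∀ t, HasDerivAt f (f' t) t) (hf'' : ∀ t, HasDerivAt f' (f'' t) t)
    (hf''cont : Continuous f'') (hf''bdd : ∃ B, ∀ t, |f'' t| ≤ B)
    (K : ℝ → ℝ) (hKmeas : Measurable K) (hKbdd : ∃ C, ∀ u, |K u| ≤ C)
    (hKsupp : HasCompactSupport K)
    (hK0 : ∫ u, K u = 1) (hK1 : ∫ u, u * K u = 0)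
    (h : ℕ → ℝ) (hpos : ∀ n, 0 < h n) (hto0 : Tendsto h atTop (nhds 0))
    (hnh : Tendsto (fun n : ℕ => n * h n) atTop atTop)
    (x : ℝ) (hx : x ∈ interior {t : ℝ | 0 < f t})
    (ghat : ℕ → Ω → ℝ)
    (hghat : ∀ n ω, ghat n ω =
      (∑ i ∈ Finset.range n, K ((x - X i ω) / h n)) / (n * h n)) :
    Tendsto (fun n : ℕ =>
        (n * h n) * ∫ ω, (ghat n ω - ∫ ω', ghat n ω' ∂μ) ^ 2 ∂μ)
      atTop (nhds (f x * ∫ u, (K u) ^ 2)) :=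
  kde_variance_general μ X hX hindep f f' hfnonneg hdist hf' K hKmeas hKbdd hKsupp h hpos hto0 x
    ghat hghat
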